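/- Let λ > 0 and let z : ℝ² → ℝ be a smooth positive function satisfying the constant astigmatism equation z_{tt} = z_{xx}/z² − 2 z_x²/z³ − 2. Define f11 = √(λ²+λ) z_t, f12 = (√(λ²+λ)/z²) z_x, f21 = (λ+1) z^{−λ} + λ z^{λ+1}, f22 = √(λ²+λ)(z^{−λ−1} + z^{λ}), f31 = −λ z^{λ+1} + (λ+1) z^{−λ}, f32 = √(λ²+λ)(z^{−λ−1} − z^{λ}). Then the pseudospherical structure-equation identities hold: D_x f12 − D_t f11 = f31 f22 − f32 f21, D_x f22 − D_t f21 = f11 f32 − f12 f31, D_x f32 − D_t f31 = f11 f22 − f12 f21. -/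

import Mathlib

noncomputable def Dx (f : ℝ → ℝ → ℝ) : ℝ → ℝ → ℝ := fun x t => deriv (fun s => f s t) x

noncomputable def Dt (f : ℝ → ℝ → ℝ) : ℝ → ℝ → ℝ := fun x t => deriv (fun s => f x s) t

private theorem castig_hA (z : ℝ → ℝ → ℝ) (hz : ContDiff ℝ (⊤ : ℕ∞) fun p : ℝ × ℝ => z p.1 p.2) :
    ∀ x t, HasDerivAt (fun s => z s t) (Dx z x t) x := by
  intro x t
  have hFd : Differentiable ℝ (fun p : ℝ × ℝ => z p.1 p.2) := hz.differentiable (by simp)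
  have h := (hFd (x, t)).hasFDerivAt.comp_hasDerivAt x
    ((hasDerivAt_id x).prodMk (hasDerivAt_const x t))
  have e : Dx z x t = fderiv ℝ (fun p : ℝ × ℝ => z p.1 p.2) (x, t) (1, 0) := h.deriv
  rw [e]; exact h

private theorem castig_hB (z : ℝ → ℝ → ℝ) (hz : ContDiff ℝ (⊤ : ℕ∞) fun p : ℝ × ℝ => z p.1 p.2) :
    ∀ x t, HasDerivAt (fun s => z x s) (Dt z x t) t := by
  intro x t
  have hFd : Differentiable ℝ (fun p : ℝ × ℝ => z p.1 p.2) := hz.differentiable (by simp)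
  have h := (hFd (x, t)).hasFDerivAt.comp_hasDerivAt t
    ((hasDerivAt_const t x).prodMk (hasDerivAt_id t))
  have e : Dt z x t = fderiv ℝ (fun p : ℝ × ℝ => z p.1 p.2) (x, t) (0, 1) := h.deriv
  rw [e]; exact h

private theorem castig_hAA (z : ℝ → ℝ → ℝ) (hz : ContDiff ℝ (⊤ : ℕ∞) fun p : ℝ × ℝ => z p.1 p.2) :
    ∀ x t, HasDerivAt (fun s => Dx z s t) (Dx (Dx z) x t) x := by
  intro x t
  have hFd : Differentiable ℝ (fun p : ℝ × ℝ => z p.1 p.2) := hz.differentiable (by simp)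
  have hsm : ContDiff ℝ (⊤ : ℕ∞) (fderiv ℝ (fun p : ℝ × ℝ => z p.1 p.2)) := hz.fderiv_right (by simp)
  have hG : Differentiable ℝ fun p : ℝ × ℝ => fderiv ℝ (fun p : ℝ × ℝ => z p.1 p.2) p (1, 0) :=
    (hsm.clm_apply contDiff_const).differentiable (by simp)
  have heq : (fun s => Dx z s t) = fun s => fderiv ℝ (fun p : ℝ × ℝ => z p.1 p.2) (s, t) (1, 0) := by
    funext s
    exact ((hFd (s, t)).hasFDerivAt.comp_hasDerivAt s
      ((hasDerivAt_id s).prodMk (hasDerivAt_const s t))).deriv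
  have hdiff : DifferentiableAt ℝ (fun s => Dx z s t) x := by
    rw [heq]
    exact (hG.comp (differentiable_id.prodMk (differentiable_const t))).differentiableAt
  exact hdiff.hasDerivAt

private theorem castig_hBB (z : ℝ → ℝ → ℝ) (hz : ContDiff ℝ (⊤ : ℕ∞) fun p : ℝ × ℝ => z p.1 p.2) :
    ∀ x t, HasDerivAt (fun s => Dt z x s) (Dt (Dt z) x t) t := by
  intro x t
  have hFd : Differentiable ℝ (fun p : ℝ × ℝ => z p.1 p.2) := hz.differentiable (by simp)
  have hsm : ContDiff ℝ (⊤ : ℕ∞) (fderiv ℝ (fun p : ℝ × ℝ => z p.1 p.2)) := hz.fderiv_right (by simp)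
  have hG : Differentiable ℝ fun p : ℝ × ℝ => fderiv ℝ (fun p : ℝ × ℝ => z p.1 p.2) p (0, 1) :=
    (hsm.clm_apply contDiff_const).differentiable (by simp)
  have heq : (fun s => Dt z x s) = fun s => fderiv ℝ (fun p : ℝ × ℝ => z p.1 p.2) (x, s) (0, 1) := by
    funext s
    exact ((hFd (x, s)).hasFDerivAt.comp_hasDerivAt s
      ((hasDerivAt_const s x).prodMk (hasDerivAt_id s))).deriv
  have hdiff : DifferentiableAt ℝ (fun s => Dt z x s) t := by
    rw [heq]
    exact (hG.comp ((differentiable_const x).prodMk differentiable_id)).differentiableAt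
  exact hdiff.hasDerivAt

/-- The constant astigmatism equation describes pseudospherical surfaces with the
linear problem of Baran–Marvan (real powers `z ^ θ` denote `Real.rpow`). -/
theorem constant_astigmatism_describes_pss (lam : ℝ) (hlam : lam > 0)
    (z : ℝ → ℝ → ℝ) (hz : ContDiff ℝ (⊤ : ℕ∞) fun p : ℝ × ℝ => z p.1 p.2)
    (hpos : ∀ x t, 0 < z x t)
    (hPDE : ∀ x t, Dt (Dt z) x t =
      Dx (Dx z) x t / (z x t) ^ 2 - 2 * (Dx z x t) ^ 2 / (z x t) ^ 3 - 2) :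
    let f11 : ℝ → ℝ → ℝ := fun x t => Real.sqrt (lam ^ 2 + lam) * Dt z x t
    let f12 : ℝ → ℝ → ℝ := fun x t => (Real.sqrt (lam ^ 2 + lam) / (z x t) ^ 2) * Dx z x t
    let f21 : ℝ → ℝ → ℝ := fun x t =>
      (lam + 1) * z x t ^ (-lam) + lam * z x t ^ (lam + 1)
    let f22 : ℝ → ℝ → ℝ := fun x t =>
      Real.sqrt (lam ^ 2 + lam) * (z x t ^ (-lam - 1) + z x t ^ lam)
    let f31 : ℝ → ℝ → ℝ := fun x t =>
      -lam * z x t ^ (lam + 1) + (lam + 1) * z x t ^ (-lam)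
    let f32 : ℝ → ℝ → ℝ := fun x t =>
      Real.sqrt (lam ^ 2 + lam) * (z x t ^ (-lam - 1) - z x t ^ lam)
    ∀ x t : ℝ,
      Dx f12 x t - Dt f11 x t = f31 x t * f22 x t - f32 x t * f21 x t ∧
      Dx f22 x t - Dt f21 x t = f11 x t * f32 x t - f12 x t * f31 x t ∧
      Dx f32 x t - Dt f31 x t = f11 x t * f22 x t - f12 x t * f21 x t := by
  intro f11 f12 f21 f22 f31 f32 x t
  simp only [f11, f12, f21, f22, f31, f32]
  have hA := castig_hA z hz
  have hB := castig_hB z hz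
  have hAA := castig_hAA z hz
  have hBB := castig_hBB z hz
  set c := Real.sqrt (lam ^ 2 + lam) with hc
  have hc2 : c * c = lam ^ 2 + lam := Real.mul_self_sqrt (by positivity)
  have hw : 0 < z x t := hpos x t
  have hwne : z x t ≠ 0 := hw.ne'
  have h2ne : (z x t) ^ 2 ≠ 0 := pow_ne_zero 2 hwne
  -- rpow identities
  have iA : z x t ^ (lam + 1) = z x t ^ lam * z x t := Real.rpow_add_one hwne lam
  have iB : z x t ^ (-lam) = z x t ^ (-lam - 1) * z x t := by
    rw [← Real.rpow_add_one hwne]; congr 1; ring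
  have iP : z x t ^ (-lam - 1) = z x t ^ (-lam - 1 - 1) * z x t := by
    rw [← Real.rpow_add_one hwne]; congr 1; ring
  have iQ : z x t ^ lam = z x t ^ (lam - 1) * z x t := by
    rw [← Real.rpow_add_one hwne]; congr 1; ring
  have hn1 : z x t ^ (lam + 1 - 1) = z x t ^ lam := by congr 1; ring
  -- derivatives
  have d12 := HasDerivAt.deriv (f := fun s => c / z s t ^ 2 * Dx z s t)
    (((hasDerivAt_const x c).div ((hA x t).pow 2) h2ne).mul (hAA x t))
  simp only [Pi.pow_apply, Pi.div_apply] at d12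
  have d11 := ((hBB x t).const_mul c).deriv
  have d22 := HasDerivAt.deriv (f := fun s => c * (z s t ^ (-lam - 1) + z s t ^ lam)) ((((hA x t).rpow_const (p := -lam - 1) (Or.inl hwne)).add
    ((hA x t).rpow_const (p := lam) (Or.inl hwne))).const_mul c)
  have d21 := HasDerivAt.deriv (f := fun s => (lam + 1) * z x s ^ (-lam) + lam * z x s ^ (lam + 1)) ((((hB x t).rpow_const (p := -lam) (Or.inl hwne)).const_mul (lam + 1)).add
    (((hB x t).rpow_const (p := lam + 1) (Or.inl hwne)).const_mul lam))
  have d32 := HasDerivAt.deriv (f := fun s => c * (z s t ^ (-lam - 1) - z s t ^ lam)) ((((hA x t).rpow_const (p := -lam - 1) (Or.inl hwne)).sub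
    ((hA x t).rpow_const (p := lam) (Or.inl hwne))).const_mul c)
  have d31 := HasDerivAt.deriv (f := fun s => -lam * z x s ^ (lam + 1) + (lam + 1) * z x s ^ (-lam)) ((((hB x t).rpow_const (p := lam + 1) (Or.inl hwne)).const_mul (-lam)).add
    (((hB x t).rpow_const (p := -lam) (Or.inl hwne)).const_mul (lam + 1)))
  have hpde := hPDE x t
  have e1 : z x t ^ (lam + 1) * z x t ^ (-lam - 1) = 1 := by
    rw [← Real.rpow_add hw, show lam + 1 + (-lam - 1) = 0 by ring, Real.rpow_zero]
  have e2 : z x t ^ (-lam) * z x t ^ lam = 1 := by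
    rw [← Real.rpow_add hw, show -lam + lam = 0 by ring, Real.rpow_zero]
  refine ⟨?_, ?_, ?_⟩
  · show deriv (fun s => f12 s t) x - deriv (fun s => f11 x s) t = _
    rw [show (fun s => f12 s t) = fun s => c / (z s t) ^ 2 * Dx z s t from rfl,
        show (fun s => f11 x s) = fun s => c * Dt z x s from rfl, d12, d11]
    rw [hpde]
    trans (2 * c)
    · field_simp
      ring
    · linear_combination (2 * lam * c) * e1 - ((2 * lam + 2) * c) * e2
  · show deriv (fun s => f22 s t) x - deriv (fun s => f21 x s) t = _
    rw [show (fun s => f22 s t) = fun s => c * ((z s t) ^ (-lam - 1) + (z s t) ^ lam) from rfl,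
        show (fun s => f21 x s) = fun s =>
          (lam + 1) * (z x s) ^ (-lam) + lam * (z x s) ^ (lam + 1) from rfl, d22, d21]
    rw [hn1]
    field_simp
    linear_combination (-(Dt z x t) * z x t ^ 2 * (z x t ^ (-lam - 1) - z x t ^ lam)) * hc2 -
      (lam * c * Dx z x t) * iA - (lam * c * Dx z x t * z x t) * iQ +
      ((lam + 1) * c * Dx z x t) * iB + ((lam + 1) * c * Dx z x t * z x t) * iP
  · show deriv (fun s => f32 s t) x - deriv (fun s => f31 x s) t = _
    rw [show (fun s => f32 s t) = fun s => c * ((z s t) ^ (-lam - 1) - (z s t) ^ lam) from rfl,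
        show (fun s => f31 x s) = fun s =>
          -lam * (z x s) ^ (lam + 1) + (lam + 1) * (z x s) ^ (-lam) from rfl, d32, d31]
    rw [hn1]
    field_simp
    linear_combination (-(Dt z x t) * z x t ^ 2 * (z x t ^ (-lam - 1) + z x t ^ lam)) * hc2 +
      (lam * c * Dx z x t) * iA + (lam * c * Dx z x t * z x t) * iQ +
      ((lam + 1) * c * Dx z x t) * iB + ((lam + 1) * c * Dx z x t * z x t) * iP
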